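/- arXiv:2212.14052 — 3 statements merged into one kernel-verified Lean document; each statement's English description precedes it below -/
import Mathlib

section
/- The state-passing algorithm is correct: splitting an input of length N = C·N' into C chunks, computing each chunk's output as y^{(c)} = M_{xy} x^{(c-1)} + f * u^{(c)} + D u^{(c)} and updating the carried state as x^{(c)} = A^{N'} x^{(c-1)} + M_{ux} u^{(c)} (with x^{(0)} = 0), yields the same output as running the full SSM recurrence on the entire length-N input. -/
/-!
Unrolling the recurrence `x (i + 1) = A x i + u (i + 1) B` over `k` steps from time `n` gives
`x (n + k) = A ^ k x n + ∑_{j=1}^{k} u (n + j) A ^ (k - j) B`. With `k = N'` this is the state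
update, so by induction the carried state `xs c` is the true state `x (c N')` at the chunk
boundary; with `k = r` and `C ⬝ᵥ ·` applied it is the chunk output formula.
-/

open Matrix Finset

namespace Matrix

variable {ι R : Type*} [Fintype ι] [DecidableEq ι]

theorem affine_recurrence_unroll [Semiring R] (A : Matrix ι ι R) (b x : ℕ → ι → R)
    (hx : ∀ i, x (i + 1) = A *ᵥ x i + b (i + 1)) (n k : ℕ) :
    x (n + k) = (A ^ k) *ᵥ x n + ∑ j ∈ Icc 1 k, (A ^ (k - j)) *ᵥ b (n + j) := by
  induction k with
  | zero => simp
  | succ k ih =>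
    have hshift : A *ᵥ ∑ j ∈ Icc 1 k, (A ^ (k - j)) *ᵥ b (n + j)
        = ∑ j ∈ Icc 1 k, (A ^ (k + 1 - j)) *ᵥ b (n + j) := by
      rw [mulVec_sum]
      refine sum_congr rfl fun j hj => ?_
      rw [mulVec_mulVec, ← pow_succ', Nat.sub_add_comm (mem_Icc.mp hj).2]
    rw [← add_assoc, hx, ih, mulVec_add, mulVec_mulVec, ← pow_succ', hshift,
      sum_Icc_succ_top (by omega), Nat.sub_self, pow_zero, one_mulVec, add_assoc, add_assoc n]

end Matrix

section

variable {ι R : Type*} [Fintype ι] [DecidableEq ι] [CommSemiring R]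

theorem ssm_state_unroll (A : Matrix ι ι R) (B : ι → R) (u : ℕ → R) (x : ℕ → ι → R)
    (hx : ∀ i, x (i + 1) = A *ᵥ x i + u (i + 1) • B) (n k : ℕ) :
    x (n + k) = (A ^ k) *ᵥ x n + ∑ j ∈ Icc 1 k, u (n + j) • (A ^ (k - j)) *ᵥ B := by
  simp only [Matrix.affine_recurrence_unroll A (fun i => u i • B) x hx n k, mulVec_smul]

theorem ssm_chunk_state_eq (A : Matrix ι ι R) (B : ι → R) (N' : ℕ) (u : ℕ → R)
    (x : ℕ → ι → R) (hx0 : x 0 = 0) (hx : ∀ i, x (i + 1) = A *ᵥ x i + u (i + 1) • B)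
    (xs : ℕ → ι → R) (hxs0 : xs 0 = 0)
    (hxs : ∀ c, xs (c + 1) =
      (A ^ N') *ᵥ xs c + ∑ i ∈ Icc 1 N', u (c * N' + i) • (A ^ (N' - i)) *ᵥ B)
    (c : ℕ) : xs c = x (c * N') := by
  induction c with
  | zero => rw [hxs0, zero_mul, hx0]
  | succ c ih => rw [hxs, ih, add_one_mul, ssm_state_unroll A B u x hx]

end

/-- Correctness of the state-passing algorithm: processing the input in chunks of size N',
computing each chunk's output from the carried state `xs c` via
y^{(c)} = M_xy xs^{(c)} + (f * u^{(c)}) + D u^{(c)} and updating the carried state via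
xs^{(c+1)} = A^{N'} xs^{(c)} + M_ux u^{(c)} (with xs^{(0)} = 0), yields the same output as
running the full SSM recurrence on the entire input. -/
theorem state_passing_correct {m : ℕ}
    (A : Matrix (Fin m) (Fin m) ℝ) (B C : Fin m → ℝ) (D : ℝ)
    (N' : ℕ) (u : ℕ → ℝ)
    (x : ℕ → Fin m → ℝ) (y : ℕ → ℝ)
    (hx0 : x 0 = 0)
    (hx : ∀ i, x (i + 1) = A.mulVec (x i) + u (i + 1) • B)
    (hy : ∀ i, y i = C ⬝ᵥ x i + D * u i)
    (xs : ℕ → Fin m → ℝ) (hxs0 : xs 0 = 0)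
    (hxs : ∀ c, xs (c + 1) =
      (A ^ N').mulVec (xs c) + ∑ i ∈ Finset.Icc 1 N', u (c * N' + i) • (A ^ (N' - i)).mulVec B)
    (ys : ℕ → ℕ → ℝ)
    (hys : ∀ c r, ys c r =
      C ⬝ᵥ (A ^ r).mulVec (xs c)
        + (∑ j ∈ Finset.Icc 1 r, (C ⬝ᵥ (A ^ (r - j)).mulVec B) * u (c * N' + j))
        + D * u (c * N' + r)) :
    ∀ c r : ℕ, 1 ≤ r → r ≤ N' → ys c r = y (c * N' + r) := by
  intro c r _ _
  rw [hys, hy, ssm_chunk_state_eq A B N' u x hx0 hx xs hxs0 hxs c,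
    ssm_state_unroll A B u x hx, dotProduct_add, dotProduct_sum]
  simp only [dotProduct_smul, smul_eq_mul, mul_comm]
end

section
/- Cooley–Tukey factorization of the DFT: if N = N₁N₂, then the N-point DFT matrix F_N factors as F_N = P (I_{N₂} ⊗ F_{N₁}) Pᵀ D (I_{N₁} ⊗ F_{N₂}) P, where P is the stride permutation reshaping the input as an N₁×N₂ array and transposing it, D is a diagonal matrix of twiddle factors, and ⊗ denotes the Kronecker product. -/
open Matrix Real

/-- Cooley–Tukey factorization of the DFT: for N = N₁N₂,
F_N = P (I_{N₂} ⊗ F_{N₁}) Pᵀ D (I_{N₁} ⊗ F_{N₂}) P, where P is the stride permutation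
(reshape–transpose), D is the diagonal matrix of twiddle factors, and the Kronecker-product
factors are the block-diagonal matrices G₁ = I_{N₂} ⊗ F_{N₁} and G₂ = I_{N₁} ⊗ F_{N₂}. -/
theorem cooley_tukey_dft_factorization (N₁ N₂ : ℕ) (hN₁ : 0 < N₁) (hN₂ : 0 < N₂)
    (F P G₁ G₂ D : Matrix (Fin (N₁ * N₂)) (Fin (N₁ * N₂)) ℂ)
    -- DFT matrix of size N = N₁N₂, with ω = e^{-2πi/N}: F_{jk} = ω^{jk}
    (hF : ∀ j k, F j k =
      Complex.exp (-2 * (π : ℂ) * Complex.I * ((j : ℕ) : ℂ) * ((k : ℕ) : ℂ) / ((N₁ : ℂ) * N₂)))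
    -- stride permutation: (P v)[n₁N₂ + n₂] = v[n₂N₁ + n₁]
    (hP : ∀ a b, P a b = if (b : ℕ) = ((a : ℕ) % N₂) * N₁ + (a : ℕ) / N₂ then 1 else 0)
    -- G₁ = I_{N₂} ⊗ F_{N₁}
    (hG₁ : ∀ a b, G₁ a b =
      if (a : ℕ) / N₁ = (b : ℕ) / N₁ then
        Complex.exp (-2 * (π : ℂ) * Complex.I * (((a : ℕ) % N₁ : ℕ) : ℂ)
          * (((b : ℕ) % N₁ : ℕ) : ℂ) / (N₁ : ℂ))
      else 0)
    -- G₂ = I_{N₁} ⊗ F_{N₂}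
    (hG₂ : ∀ a b, G₂ a b =
      if (a : ℕ) / N₂ = (b : ℕ) / N₂ then
        Complex.exp (-2 * (π : ℂ) * Complex.I * (((a : ℕ) % N₂ : ℕ) : ℂ)
          * (((b : ℕ) % N₂ : ℕ) : ℂ) / (N₂ : ℂ))
      else 0)
    -- diagonal twiddle factors: D_{aa} = ω^{(a mod N₂)(a div N₂)}
    (hD : ∀ a b, D a b =
      if a = b then
        Complex.exp (-2 * (π : ℂ) * Complex.I * (((a : ℕ) % N₂ : ℕ) : ℂ)
          * (((a : ℕ) / N₂ : ℕ) : ℂ) / ((N₁ : ℂ) * N₂))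
      else 0) :
    F = P * G₁ * Pᵀ * D * G₂ * P := by
  have hN : 0 < N₁ * N₂ := Nat.mul_pos hN₁ hN₂
  have hd1 : ∀ a : Fin (N₁*N₂), (a:ℕ)/N₂ < N₁ := fun a =>
    Nat.div_lt_of_lt_mul (a.isLt.trans_eq (Nat.mul_comm N₁ N₂))
  have hd2 : ∀ a : Fin (N₁*N₂), (a:ℕ)/N₁ < N₂ := fun a =>
    Nat.div_lt_of_lt_mul a.isLt
  have key : ∀ {x y q r : ℕ}, q < y → r < x → q * x + r < x * y := by
    intro x y q r hq hr
    calc q*x + r < q*x + x := by omega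
    _ = (q+1)*x := by ring
    _ ≤ y*x := Nat.mul_le_mul_right x hq
    _ = x*y := Nat.mul_comm _ _
  set f : Fin (N₁*N₂) → Fin (N₁*N₂) := fun a =>
    ⟨(a:ℕ)%N₂ * N₁ + (a:ℕ)/N₂, key (Nat.mod_lt _ hN₂) (hd1 a)⟩ with hf
  set g : Fin (N₁*N₂) → Fin (N₁*N₂) := fun a =>
    ⟨(a:ℕ)%N₁ * N₂ + (a:ℕ)/N₁, by
      exact (key (Nat.mod_lt (a:ℕ) hN₁) (hd2 a)).trans_eq (Nat.mul_comm N₂ N₁)⟩ with hg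
  have hfdiv : ∀ a : Fin (N₁*N₂), ((f a : ℕ))/N₁ = (a:ℕ)%N₂ := by
    intro a
    show ((a:ℕ)%N₂ * N₁ + (a:ℕ)/N₂)/N₁ = (a:ℕ)%N₂
    rw [mul_comm, Nat.mul_add_div hN₁, Nat.div_eq_of_lt (hd1 a), add_zero]
  have hfmod : ∀ a : Fin (N₁*N₂), ((f a : ℕ))%N₁ = (a:ℕ)/N₂ := by
    intro a
    show ((a:ℕ)%N₂ * N₁ + (a:ℕ)/N₂)%N₁ = (a:ℕ)/N₂
    rw [mul_comm, Nat.mul_add_mod, Nat.mod_eq_of_lt (hd1 a)]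
  have hgdiv : ∀ a : Fin (N₁*N₂), ((g a : ℕ))/N₂ = (a:ℕ)%N₁ := by
    intro a
    show ((a:ℕ)%N₁ * N₂ + (a:ℕ)/N₁)/N₂ = (a:ℕ)%N₁
    rw [mul_comm, Nat.mul_add_div hN₂, Nat.div_eq_of_lt (hd2 a), add_zero]
  have hgmod : ∀ a : Fin (N₁*N₂), ((g a : ℕ))%N₂ = (a:ℕ)/N₁ := by
    intro a
    show ((a:ℕ)%N₁ * N₂ + (a:ℕ)/N₁)%N₂ = (a:ℕ)/N₁
    rw [mul_comm, Nat.mul_add_mod, Nat.mod_eq_of_lt (hd2 a)]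
  have hgf : ∀ a, g (f a) = a := by
    intro a
    apply Fin.ext
    show ((f a : ℕ))%N₁ * N₂ + ((f a : ℕ))/N₁ = (a:ℕ)
    rw [hfmod, hfdiv, mul_comm]
    exact Nat.div_add_mod _ _
  have hfg : ∀ a, f (g a) = a := by
    intro a
    apply Fin.ext
    show ((g a : ℕ))%N₂ * N₁ + ((g a : ℕ))/N₂ = (a:ℕ)
    rw [hgmod, hgdiv, mul_comm]
    exact Nat.div_add_mod _ _
  -- P entries as Fin-valued delta
  have hP' : ∀ a b, P a b = if b = f a then 1 else 0 := by
    intro a b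
    rw [hP]
    congr 1
    simp [hf, Fin.ext_iff]
  have hPT' : ∀ a b, Pᵀ a b = if a = f b then 1 else 0 := by
    intro a b; rw [Matrix.transpose_apply, hP']
  -- multiplication lemmas
  have hPM : ∀ (M : Matrix (Fin (N₁*N₂)) (Fin (N₁*N₂)) ℂ) j k, (P * M) j k = M (f j) k := by
    intro M j k
    rw [Matrix.mul_apply]
    simp [hP']
  have hMPT : ∀ (M : Matrix (Fin (N₁*N₂)) (Fin (N₁*N₂)) ℂ) j c, (M * Pᵀ) j c = M j (f c) := by
    intro M j c
    rw [Matrix.mul_apply]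
    simp [Matrix.transpose_apply, hP']
  have hMP : ∀ (M : Matrix (Fin (N₁*N₂)) (Fin (N₁*N₂)) ℂ) j k, (M * P) j k = M j (g k) := by
    intro M j k
    rw [Matrix.mul_apply]
    have : ∀ b, P b k = if b = g k then 1 else 0 := by
      intro b
      rw [hP' b k]
      by_cases h : b = g k
      · rw [if_pos h, if_pos (by rw [h, hfg])]
      · rw [if_neg h, if_neg (fun hk => h (by rw [hk, hgf]))]
    simp [this]
  have hMD : ∀ (M : Matrix (Fin (N₁*N₂)) (Fin (N₁*N₂)) ℂ) j c, (M * D) j c = M j c *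
      Complex.exp (-2 * (π : ℂ) * Complex.I * (((c : ℕ) % N₂ : ℕ) : ℂ)
          * (((c : ℕ) / N₂ : ℕ) : ℂ) / ((N₁ : ℂ) * N₂)) := by
    intro M j c
    rw [Matrix.mul_apply]
    simp [hD]
  have expeq : ∀ (A B : ℂ) (m : ℤ), A = B + m * (2*(π:ℂ)*Complex.I) →
      Complex.exp A = Complex.exp B := by
    intro A B m h
    rw [h, Complex.exp_add, Complex.exp_int_mul_two_pi_mul_I, mul_one]
  have hN₁C : (N₁ : ℂ) ≠ 0 := Nat.cast_ne_zero.mpr hN₁.ne'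
  have hN₂C : (N₂ : ℂ) ≠ 0 := Nat.cast_ne_zero.mpr hN₂.ne'
  ext j k
  rw [hF, hMP, Matrix.mul_apply]
  simp only [hMD, hMPT, hPM]
  set c₀ : Fin (N₁*N₂) := ⟨(k:ℕ)%N₁ * N₂ + (j:ℕ)%N₂, by
    exact (key (Nat.mod_lt (k:ℕ) hN₁) (Nat.mod_lt (j:ℕ) hN₂)).trans_eq (Nat.mul_comm N₂ N₁)⟩ with hc₀
  have hc0div : ((c₀:ℕ))/N₂ = (k:ℕ)%N₁ := by
    show ((k:ℕ)%N₁ * N₂ + (j:ℕ)%N₂)/N₂ = (k:ℕ)%N₁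
    rw [mul_comm, Nat.mul_add_div hN₂, Nat.div_eq_of_lt (Nat.mod_lt _ hN₂), add_zero]
  have hc0mod : ((c₀:ℕ))%N₂ = (j:ℕ)%N₂ := by
    show ((k:ℕ)%N₁ * N₂ + (j:ℕ)%N₂)%N₂ = (j:ℕ)%N₂
    rw [mul_comm, Nat.mul_add_mod, Nat.mod_eq_of_lt (Nat.mod_lt _ hN₂)]
  rw [Finset.sum_eq_single_of_mem c₀ (Finset.mem_univ _)]
  · rw [hG₁, hG₂, hfdiv, hfdiv, hfmod, hfmod, hgdiv, hgmod, hc0div, hc0mod,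
      if_pos rfl, if_pos rfl]
    rw [← Complex.exp_add, ← Complex.exp_add]
    apply expeq _ _ (-(((j:ℕ)/N₂ * ((k:ℕ)/N₁) : ℕ) : ℤ))
    set J1 := (j:ℕ)/N₂ with hJ1
    set J2 := (j:ℕ)%N₂ with hJ2
    set K1 := (k:ℕ)%N₁ with hK1
    set K2 := (k:ℕ)/N₁ with hK2
    have hjj : ((j:ℕ):ℂ) = (N₂:ℂ)*(J1:ℂ) + (J2:ℂ) := by
      exact_mod_cast congrArg (Nat.cast : ℕ → ℂ) (Nat.div_add_mod (j:ℕ) N₂).symm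
    have hkk : ((k:ℕ):ℂ) = (N₁:ℂ)*(K2:ℂ) + (K1:ℂ) := by
      exact_mod_cast congrArg (Nat.cast : ℕ → ℂ) (Nat.div_add_mod (k:ℕ) N₁).symm
    rw [hjj, hkk]
    push_cast
    field_simp
    ring
  · intro b _ hb
    rw [hG₁, hG₂, hfdiv, hfdiv, hfmod, hfmod, hgdiv, hgmod]
    by_cases h1 : (j:ℕ)%N₂ = (b:ℕ)%N₂
    · by_cases h2 : (b:ℕ)/N₂ = (k:ℕ)%N₁
      · exfalso
        apply hb
        apply Fin.ext
        show (b:ℕ) = (k:ℕ)%N₁ * N₂ + (j:ℕ)%N₂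
        rw [h1, ← h2]
        conv_lhs => rw [← Nat.div_add_mod (b:ℕ) N₂]
        ring
      · rw [if_neg h2, mul_zero]
    · rw [if_neg h1, zero_mul, zero_mul]
end

section
/- Composing the shift SSM with delay and a diagonal cumulative-sum SSM with gating solves associative recall: in the formal construction of Appendix C.1, for any sequence x from the language Λ ending in key k_i that has appeared earlier, the output of the constructed two-projections H3 layer at the final position is a positive multiple of the binary encoding of f_x(k_i), while all other heads output zero. -/
open Finset

/-! A key `k` at odd position `τ - 1` is followed by its value at `τ`, and the one-step delay
lets the gate at time `τ` see `k` while `V` sees that value. At the final position the query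
selects the head of the final key `k_i`, so the cumulative sum in that head adds up one copy of
the encoding of `f_x(k_i)` for every earlier occurrence of `k_i`; in every other head the query
vanishes. -/

theorem Finset.sum_boole_mul_eq_card_filter_mul {ι R : Type*} [NonAssocSemiring R]
    (S : Finset ι) (p : ι → Prop) [DecidablePred p] (f : ι → R) (c : R)
    (hf : ∀ τ ∈ S, p τ → f τ = c) :
    ∑ τ ∈ S, (if p τ then 1 else 0) * f τ = #{τ ∈ S | p τ} * c := by
  simp only [boole_mul]
  rw [← sum_filter, sum_eq_card_nsmul (fun τ hτ => hf τ (mem_filter.1 hτ).1 (mem_filter.1 hτ).2),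
    nsmul_eq_mul]

namespace AssociativeRecall

variable {N : ℕ} {s : ℕ → Fin 8} {fmap : Fin 8 → Fin 4}

theorem odd_of_key
    (hval : ∀ i, 1 ≤ i → 2 * i ≤ N → (s (2 * i) : ℕ) = 4 + (fmap (s (2 * i - 1)) : ℕ))
    {t : ℕ} (ht : 1 ≤ t) (htN : t ≤ N) (hkey : (s t : ℕ) < 4) : t % 2 = 1 := by
  by_contra heven
  have := hval (t / 2) (by omega) (by omega)
  rw [show 2 * (t / 2) = t by omega] at this
  omega

theorem value_after_key
    (hval : ∀ i, 1 ≤ i → 2 * i ≤ N → (s (2 * i) : ℕ) = 4 + (fmap (s (2 * i - 1)) : ℕ))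
    {t : ℕ} (hodd : t % 2 = 1) (htN : t < N) : (s (t + 1) : ℕ) = 4 + (fmap (s t) : ℕ) := by
  have := hval ((t + 1) / 2) (by omega) (by omega)
  rwa [show 2 * ((t + 1) / 2) = t + 1 by omega, Nat.add_sub_cancel] at this

variable {enc : Fin 4 → Fin 2 → ℝ} {V : ℕ → Fin 4 → Fin 2 → ℝ}

theorem V_eq_enc_of_value
    (hV : ∀ t h j, V t h j =
      if hv : 4 ≤ (s t : ℕ) then enc ⟨(s t : ℕ) - 4, by have := (s t).isLt; omega⟩ j else 0)
    {t : ℕ} {v : Fin 4} (hv : (s t : ℕ) = 4 + (v : ℕ)) (h : Fin 4) (j : Fin 2) :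
    V t h j = enc v j := by
  rw [hV, dif_pos (by omega)]
  congr 1
  exact Fin.ext (by simp only [hv, Nat.add_sub_cancel_left])

/-- As `N` is even, a key position `τ - 1 ≤ N` lies strictly below `N`, so the value bound to
that key is still inside the prefix. -/
theorem V_eq_enc_fmap_of_key (hN : Even N)
    (hval : ∀ i, 1 ≤ i → 2 * i ≤ N → (s (2 * i) : ℕ) = 4 + (fmap (s (2 * i - 1)) : ℕ))
    (hV : ∀ t h j, V t h j =
      if hv : 4 ≤ (s t : ℕ) then enc ⟨(s t : ℕ) - 4, by have := (s t).isLt; omega⟩ j else 0)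
    {τ : ℕ} (hτ : τ ∈ Icc 2 (N + 1)) (hkey : (s (τ - 1) : ℕ) < 4) (h : Fin 4) (j : Fin 2) :
    V τ h j = enc (fmap (s (τ - 1))) j := by
  obtain ⟨hτ2, hτN⟩ := mem_Icc.1 hτ
  obtain ⟨M, rfl⟩ := hN
  have hodd := odd_of_key hval (by omega) (by omega) hkey
  have hv := value_after_key hval hodd (by omega)
  rw [Nat.sub_add_cancel (by omega)] at hv
  exact V_eq_enc_of_value hV hv h j

end AssociativeRecall

open AssociativeRecall in
/-- The H3 construction solves associative recall on the language Λ: tokens 0–3 are keys and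
4–7 are values; odd positions hold keys, even positions hold the value 4 + fmap(previous key),
and the final position N+1 holds a key i that appeared earlier at an odd position. The H3 layer
with per-head output O_t^{(h)} j = Q_t^{(h)} j · ∑_{τ≤t} (shifted K)_τ^{(h)} j · V_τ^{(h)} j,
where Q routes key h to head h, the shift SSM delays K by one step, the diagonal SSM is a
cumulative sum, and V is the binary encoding of values, outputs at the final position a
positive multiple of the binary encoding of f_x(k_i) in head i, and zero in every other head. -/
theorem h3_solves_associative_recall
    (N : ℕ) (hN : Even N)
    (s : ℕ → Fin 8) (fmap : Fin 8 → Fin 4)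
    (hval : ∀ i, 1 ≤ i → 2 * i ≤ N → (s (2 * i) : ℕ) = 4 + (fmap (s (2 * i - 1)) : ℕ))
    (i : Fin 4) (hi : (s (N + 1) : ℕ) = (i : ℕ))
    (happ : ∃ t, t % 2 = 1 ∧ 1 ≤ t ∧ t ≤ N - 1 ∧ s t = s (N + 1))
    (enc : Fin 4 → Fin 2 → ℝ)
    (Q V O : ℕ → Fin 4 → Fin 2 → ℝ)
    (hQ : ∀ t h j, Q t h j = if (s t : ℕ) = (h : ℕ) then 1 else 0)
    (hV : ∀ t h j, V t h j =
      if hv : 4 ≤ (s t : ℕ) then enc ⟨(s t : ℕ) - 4, by have := (s t).isLt; omega⟩ j else 0)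
    (hO : ∀ t h j, O t h j =
      Q t h j * ∑ τ ∈ Finset.Icc 2 t,
        (if (s (τ - 1) : ℕ) = (h : ℕ) then 1 else 0) * V τ h j) :
    (∃ c : ℝ, 0 < c ∧ ∀ j, O (N + 1) i j = c * enc (fmap (s (N + 1))) j) ∧
    (∀ h : Fin 4, h ≠ i → ∀ j, O (N + 1) h j = 0) := by
  refine ⟨⟨#{τ ∈ Icc 2 (N + 1) | (s (τ - 1) : ℕ) = (i : ℕ)}, ?_, fun j => ?_⟩, ?_⟩
  · obtain ⟨t, -, ht1, htN, hst⟩ := happ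
    have : t + 1 ∈ {τ ∈ Icc 2 (N + 1) | (s (τ - 1) : ℕ) = (i : ℕ)} := by
      simp only [mem_filter, mem_Icc, Nat.add_sub_cancel, hst, hi, and_true]
      omega
    exact_mod_cast card_pos.2 ⟨_, this⟩
  · rw [hO, hQ, if_pos hi, one_mul]
    refine sum_boole_mul_eq_card_filter_mul _ _ _ _ fun τ hτ hsτ => ?_
    rw [V_eq_enc_fmap_of_key hN hval hV hτ (hsτ ▸ i.isLt), Fin.ext (hsτ.trans hi.symm)]
  · intro h hne j
    rw [hO, hQ, if_neg (fun hs => hne (Fin.ext (hi ▸ hs).symm)), zero_mul]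
end
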